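/- For every LTL formula φ, the SLAA A_φ constructed by the F,G-merging translation has at most |φ| states (its states are subformulae of φ), and its number of acceptance marks is at most exponential in |φ|: writing n for the number of states, A_φ has at most n marks of the form f_ψ, at most n marks of the form e_ψ, and at most 2^n marks of the form o^K_{Fψ}, so |Marks| ≤ 2n + 2^n. -/
import Mathlib


set_option maxHeartbeats 1000000

namespace SLAA

/-- Shift an infinite word: `shift u i` is the suffix `u[i..]`. -/
def shift {α : Type} (u : ℕ → α) (i : ℕ) : ℕ → α := fun k => u (k + i)

/-- LTL formulae in positive normal form over atomic propositions `AP`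
(`ev` is the eventually operator F, `alw` is the always operator G). -/
inductive LTL (AP : Type) : Type
  | tt : LTL AP
  | ff : LTL AP
  | atom (a : AP) : LTL AP
  | natom (a : AP) : LTL AP
  | or (φ ψ : LTL AP) : LTL AP
  | and (φ ψ : LTL AP) : LTL AP
  | next (φ : LTL AP) : LTL AP
  | untl (φ ψ : LTL AP) : LTL AP
  | rels (φ ψ : LTL AP) : LTL AP
  | ev (φ : LTL AP) : LTL AP
  | alw (φ : LTL AP) : LTL AP

namespace LTL
variable {AP : Type}

/-- Satisfaction of an LTL formula by an infinite word `u : ℕ → Set AP`. -/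
def Sat : (ℕ → Set AP) → LTL AP → Prop
  | _, .tt => True
  | _, .ff => False
  | u, .atom a => a ∈ u 0
  | u, .natom a => a ∉ u 0
  | u, .or φ ψ => Sat u φ ∨ Sat u ψ
  | u, .and φ ψ => Sat u φ ∧ Sat u ψ
  | u, .next φ => Sat (shift u 1) φ
  | u, .untl φ ψ => ∃ i, Sat (shift u i) ψ ∧ ∀ j < i, Sat (shift u j) φ
  | u, .rels φ ψ =>
      (∃ i, Sat (shift u i) φ ∧ ∀ j ≤ i, Sat (shift u j) ψ) ∨ ∀ i, Sat (shift u i) ψ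
  | u, .ev φ => ∃ i, Sat (shift u i) φ
  | u, .alw φ => ∀ i, Sat (shift u i) φ

/-- The set of atomic propositions occurring in a formula. -/
def apSet : LTL AP → Set AP
  | .tt | .ff => ∅
  | .atom a | .natom a => {a}
  | .or φ ψ | .and φ ψ | .untl φ ψ | .rels φ ψ => φ.apSet ∪ ψ.apSet
  | .next φ | .ev φ | .alw φ => φ.apSet

/-- The size of a formula (number of its subformula occurrences). -/
def size : LTL AP → ℕ
  | .tt | .ff | .atom _ | .natom _ => 1
  | .or φ ψ | .and φ ψ | .untl φ ψ | .rels φ ψ => φ.size + ψ.size + 1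
  | .next φ | .ev φ | .alw φ => φ.size + 1

/-- The list of subformulae of a formula (with multiplicities). -/
def subs : LTL AP → List (LTL AP)
  | .tt => [.tt]
  | .ff => [.ff]
  | .atom a => [.atom a]
  | .natom a => [.natom a]
  | .or φ ψ => .or φ ψ :: (φ.subs ++ ψ.subs)
  | .and φ ψ => .and φ ψ :: (φ.subs ++ ψ.subs)
  | .next φ => .next φ :: φ.subs
  | .untl φ ψ => .untl φ ψ :: (φ.subs ++ ψ.subs)
  | .rels φ ψ => .rels φ ψ :: (φ.subs ++ ψ.subs)
  | .ev φ => .ev φ :: φ.subs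
  | .alw φ => .alw φ :: φ.subs

/-- The set of subformulae of a formula. -/
def subsSet (φ : LTL AP) : Set (LTL AP) := {ψ | ψ ∈ φ.subs}

/-- A temporal formula: the topmost operator is neither `∧` nor `∨`. -/
def IsTemporal : LTL AP → Prop
  | .or _ _ => False
  | .and _ _ => False
  | _ => True

/-- A state formula: no temporal operator occurs in it. -/
def IsState : LTL AP → Prop
  | .tt | .ff | .atom _ | .natom _ => True
  | .or φ ψ | .and φ ψ => φ.IsState ∧ ψ.IsState
  | .next _ | .untl _ _ | .rels _ _ | .ev _ | .alw _ => False

/-- Test whether a formula is an `U`-formula. -/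
def isU : LTL AP → Bool
  | .untl _ _ => true
  | _ => false

/-- Test whether a formula is an `F`-formula. -/
def isEv : LTL AP → Bool
  | .ev _ => true
  | _ => false

/-- The disjunctive decomposition `ψ̄` of a formula, as a list of disjuncts,
each disjunct being a set of (temporal) formulae whose conjunction it stands for. -/
def dnfList : LTL AP → List (Set (LTL AP))
  | .or φ ψ => φ.dnfList ++ ψ.dnfList
  | .and φ ψ => φ.dnfList.flatMap (fun K₁ => ψ.dnfList.map (fun K₂ => K₁ ∪ K₂))
  | χ => [{χ}]

/-- The top-level conjuncts of a formula. -/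
def conjuncts : LTL AP → Set (LTL AP)
  | .and φ ψ => φ.conjuncts ∪ ψ.conjuncts
  | χ => {χ}

/-- The language of an LTL formula: all words over the alphabet `2^{AP(φ)}`
satisfying `φ`. -/
def Lang (φ : LTL AP) : Set (ℕ → Set AP) :=
  {u | (∀ i, u i ⊆ φ.apSet) ∧ φ.Sat u}

end LTL

/-- A transition of an alternating automaton: a source state, a letter,
a set of acceptance marks, and a destination configuration. -/
structure Trans (St Λ Mk : Type) where
  src : St
  lab : Λ
  marks : Set Mk
  dest : Set St

/-- Acceptance formulae: positive boolean combinations of `Fin m` and `Inf m`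
terms (with boolean constants). -/
inductive AccFormula (Mk : Type) : Type
  | tt : AccFormula Mk
  | ff : AccFormula Mk
  | fin (m : Mk) : AccFormula Mk
  | inf (m : Mk) : AccFormula Mk
  | and (φ ψ : AccFormula Mk) : AccFormula Mk
  | or (φ ψ : AccFormula Mk) : AccFormula Mk

namespace AccFormula
variable {Mk : Type}

/-- Satisfaction of an acceptance formula, given the set `I` of marks that
occur infinitely often. -/
def Sat (I : Set Mk) : AccFormula Mk → Prop
  | .tt => True
  | .ff => False
  | .fin m => m ∉ I
  | .inf m => m ∈ I
  | .and φ ψ => Sat I φ ∧ Sat I ψ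
  | .or φ ψ => Sat I φ ∨ Sat I ψ

/-- Marks occurring in `Fin` terms. -/
def finMarkSet : AccFormula Mk → Set Mk
  | .fin m => {m}
  | .and φ ψ | .or φ ψ => φ.finMarkSet ∪ ψ.finMarkSet
  | _ => ∅

/-- Marks occurring in `Inf` terms. -/
def infMarkSet : AccFormula Mk → Set Mk
  | .inf m => {m}
  | .and φ ψ | .or φ ψ => φ.infMarkSet ∪ ψ.infMarkSet
  | _ => ∅

/-- An acceptance formula is Inf-less if it contains no `Inf` terms. -/
def InfLess (Φ : AccFormula Mk) : Prop := Φ.infMarkSet = ∅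

end AccFormula

/-- A `Fin`/`Inf` term of an acceptance formula. -/
inductive AccTerm (Mk : Type) : Type
  | fin (m : Mk) : AccTerm Mk
  | inf (m : Mk) : AccTerm Mk

namespace AccFormula
variable {Mk : Type}

/-- The set of terms of an acceptance formula. -/
def terms : AccFormula Mk → Set (AccTerm Mk)
  | .fin m => {.fin m}
  | .inf m => {.inf m}
  | .and φ ψ | .or φ ψ => φ.terms ∪ ψ.terms
  | _ => ∅

/-- Evaluation of an acceptance formula where exactly the terms in `O` are true. -/
def evalTerms (O : Set (AccTerm Mk)) : AccFormula Mk → Prop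
  | .tt => True
  | .ff => False
  | .fin m => AccTerm.fin m ∈ O
  | .inf m => AccTerm.inf m ∈ O
  | .and φ ψ => evalTerms O φ ∧ evalTerms O ψ
  | .or φ ψ => evalTerms O φ ∨ evalTerms O ψ

/-- Minimal models of an acceptance formula: subsets of its terms satisfying it,
no proper subset of which satisfies it. -/
def MinModels (Φ : AccFormula Mk) : Set (Set (AccTerm Mk)) :=
  {O | O ⊆ Φ.terms ∧ Φ.evalTerms O ∧ ∀ O' ⊂ O, ¬ Φ.evalTerms O'}

end AccFormula

/-- `Fin`-marks of a model. -/
def finOf {Mk : Type} (O : Set (AccTerm Mk)) : Set Mk := {m | AccTerm.fin m ∈ O}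

/-- `Inf`-marks of a model. -/
def infOf {Mk : Type} (O : Set (AccTerm Mk)) : Set Mk := {m | AccTerm.inf m ∈ O}

/-- An alternating automaton with transition-based Emerson-Lei acceptance. -/
structure AltAutomaton (St Λ Mk : Type) where
  states : Set St
  alphabet : Set Λ
  marks : Set Mk
  delta : Set (Trans St Λ Mk)
  init : St
  acc : AccFormula Mk

variable {St Λ Mk : Type}

/-- Well-formedness of an alternating automaton: finiteness of the state set,
alphabet and mark set, and typing of the transition relation and acceptance
formula. -/
def AltAutomaton.WellFormed (A : AltAutomaton St Λ Mk) : Prop :=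
  A.states.Finite ∧ A.alphabet.Finite ∧ A.marks.Finite ∧ A.init ∈ A.states ∧
  (∀ t ∈ A.delta, t.src ∈ A.states ∧ t.lab ∈ A.alphabet ∧
      t.marks ⊆ A.marks ∧ t.dest ⊆ A.states) ∧
  A.acc.finMarkSet ∪ A.acc.infMarkSet ⊆ A.marks

/-- A self-loop alternating automaton: some partial order puts every
destination state of a transition below its source. -/
def AltAutomaton.IsSLAA (A : AltAutomaton St Λ Mk) : Prop :=
  ∃ le : St → St → Prop, IsPartialOrder St le ∧
    ∀ t ∈ A.delta, ∀ s ∈ t.dest, le s t.src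

/-- `T` is a multitransition under the letter `α`. -/
def IsMulti (T : Set (Trans St Λ Mk)) (α : Λ) : Prop :=
  (∀ t ∈ T, t.lab = α) ∧
  ∀ t₁ ∈ T, ∀ t₂ ∈ T, t₁.src = t₂.src → t₁ = t₂

/-- Source configuration of a multitransition. -/
def mdom (T : Set (Trans St Λ Mk)) : Set St := {s | ∃ t ∈ T, t.src = s}

/-- Destination configuration of a multitransition. -/
def mrange (T : Set (Trans St Λ Mk)) : Set St := {s | ∃ t ∈ T, s ∈ t.dest}

/-- Restriction of a multitransition to transitions whose source lies in `C`. -/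
def restrict (T : Set (Trans St Λ Mk)) (C : Set St) : Set (Trans St Λ Mk) :=
  {t | t ∈ T ∧ t.src ∈ C}

/-- A transition in `T` carries the mark `m`. -/
def markedBy (T : Set (Trans St Λ Mk)) (m : Mk) : Prop := ∃ t ∈ T, m ∈ t.marks

/-- `T` is `s`-escaping: it contains a non-looping transition with source `s`. -/
def escaping (T : Set (Trans St Λ Mk)) (s : St) : Prop :=
  ∃ t ∈ T, t.src = s ∧ s ∉ t.dest

/-- `ρ` is a run of `A` over the word `u`. -/
def AltAutomaton.IsRun (A : AltAutomaton St Λ Mk) (u : ℕ → Λ)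
    (ρ : ℕ → Set (Trans St Λ Mk)) : Prop :=
  mdom (ρ 0) = {A.init} ∧
  ∀ i, ρ i ⊆ A.delta ∧ IsMulti (ρ i) (u i) ∧ mrange (ρ i) = mdom (ρ (i + 1))

/-- An infinite branch of a sequence of multitransitions: at every level `i`
it follows a transition of `ρ i`, starting at level 0. -/
def IsInfBranch (ρ : ℕ → Set (Trans St Λ Mk)) (b : ℕ → Trans St Λ Mk) : Prop :=
  ∀ i, b i ∈ ρ i ∧ (b (i + 1)).src ∈ (b i).dest

/-- The set `M(b)` of marks occurring infinitely often along a branch. -/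
def infMarks (b : ℕ → Trans St Λ Mk) : Set Mk :=
  {m | ∀ N, ∃ i, N ≤ i ∧ m ∈ (b i).marks}

/-- An accepting run: a run all of whose infinite branches satisfy the
acceptance formula. -/
def AltAutomaton.IsAccRun (A : AltAutomaton St Λ Mk) (u : ℕ → Λ)
    (ρ : ℕ → Set (Trans St Λ Mk)) : Prop :=
  A.IsRun u ρ ∧ ∀ b, IsInfBranch ρ b → A.acc.Sat (infMarks b)

/-- The language of an alternating automaton. -/
def AltAutomaton.Lang (A : AltAutomaton St Λ Mk) : Set (ℕ → Λ) :=
  {u | (∀ i, u i ∈ A.alphabet) ∧ ∃ ρ, A.IsAccRun u ρ}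

/-- Product of two sets of (marks, configuration) pairs. -/
def otimes {Mk St : Type} (P Q : Set (Set Mk × Set St)) : Set (Set Mk × Set St) :=
  {r | ∃ p ∈ P, ∃ q ∈ Q, r = (p.1 ∪ q.1, p.2 ∪ q.2)}

/-- Marks eraser. -/
def me {Mk St : Type} (P : Set (Set Mk × Set St)) : Set (Set Mk × Set St) :=
  {r | ∃ p ∈ P, r = ((∅ : Set Mk), p.2)}

/-- The transition function of the basic translation (with a single co-Büchi
mark `()`); `F ψ` is handled as `tt U ψ` and `G ψ` as `ff R ψ`. -/
def basicDelta {AP : Type} : LTL AP → Set AP → Set (Set Unit × Set (LTL AP))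
  | .tt, _ => {((∅ : Set Unit), (∅ : Set (LTL AP)))}
  | .ff, _ => ∅
  | .atom a, α => {p | p = ((∅ : Set Unit), (∅ : Set (LTL AP))) ∧ a ∈ α}
  | .natom a, α => {p | p = ((∅ : Set Unit), (∅ : Set (LTL AP))) ∧ a ∉ α}
  | .and φ ψ, α => me (otimes (basicDelta φ α) (basicDelta ψ α))
  | .or φ ψ, α => me (basicDelta φ α ∪ basicDelta ψ α)
  | .next φ, _ => {((∅ : Set Unit), ({φ} : Set (LTL AP)))}
  | .untl φ ψ, α =>
      me (basicDelta ψ α) ∪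
        otimes {(({()} : Set Unit), ({LTL.untl φ ψ} : Set (LTL AP)))} (me (basicDelta φ α))
  | .ev ψ, α =>
      me (basicDelta ψ α) ∪
        otimes {(({()} : Set Unit), ({LTL.ev ψ} : Set (LTL AP)))}
          (me {((∅ : Set Unit), (∅ : Set (LTL AP)))})
  | .rels φ ψ, α =>
      me (otimes (basicDelta φ α) (basicDelta ψ α)) ∪
        me (otimes {((∅ : Set Unit), ({LTL.rels φ ψ} : Set (LTL AP)))} (basicDelta ψ α))
  | .alw ψ, α =>
      me (otimes (∅ : Set (Set Unit × Set (LTL AP))) (basicDelta ψ α)) ∪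
        me (otimes {((∅ : Set Unit), ({LTL.alw ψ} : Set (LTL AP)))} (basicDelta ψ α))

/-- Product over a set `K` of formulae, given a transition set `d χ` for each
formula `χ`. -/
def setOtimes {AP Mk : Type} (d : LTL AP → Set (Set Mk × Set (LTL AP)))
    (K : Set (LTL AP)) : Set (Set Mk × Set (LTL AP)) :=
  {r | ∃ f : LTL AP → Set Mk × Set (LTL AP), (∀ χ ∈ K, f χ ∈ d χ) ∧
        r = (⋃ χ ∈ K, (f χ).1, ⋃ χ ∈ K, (f χ).2)}

/-- `Δ(ψ_K, α)` where `ψ_K` is the conjunction of all formulae in `K`: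
for a singleton `K = {χ}` it is `Δ(χ, α)`, otherwise the `∧`-rule erases
the marks of the product. -/
def conjDelta {AP Mk : Type} (d : LTL AP → Set (Set Mk × Set (LTL AP)))
    (K : Set (LTL AP)) : Set (Set Mk × Set (LTL AP)) :=
  {r | (∃ χ, K = {χ} ∧ r ∈ d χ) ∨ ((¬ ∃ χ, K = {χ}) ∧ r ∈ me (setOtimes d K))}

/-- Looping transitions of `ψ_K` (destination subsumes `K`), with `K` removed
from the destination. -/
def deltaL {AP Mk : Type} (d : LTL AP → Set (Set Mk × Set (LTL AP)))
    (K : Set (LTL AP)) : Set (Set Mk × Set (LTL AP)) :=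
  {r | ∃ p ∈ conjDelta d K, K ⊆ p.2 ∧ r = (p.1, p.2 \ K)}

/-- Non-looping transitions of `ψ_K`. -/
def deltaNL {AP Mk : Type} (d : LTL AP → Set (Set Mk × Set (LTL AP)))
    (K : Set (LTL AP)) : Set (Set Mk × Set (LTL AP)) :=
  {p | p ∈ conjDelta d K ∧ ¬ K ⊆ p.2}

/-- Acceptance marks of the F-merging translation: the co-Büchi mark and the
orange marks `o^K_{Fψ}`. -/
inductive FMark (AP : Type) : Type
  | base : FMark AP
  | orange (ψ : LTL AP) (K : Set (LTL AP)) : FMark AP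

/-- The set of orange marks `M_K = {o^{K'}_{Fψ} | K' ∈ ψ̄, K' ≠ K}`. -/
def fMK {AP : Type} (ψ : LTL AP) (K : Set (LTL AP)) : Set (FMark AP) :=
  {m | ∃ K', K' ∈ ψ.dnfList ∧ K' ≠ K ∧ m = FMark.orange ψ K'}

/-- The transition function of the F-merging translation. -/
def fmergeDelta {AP : Type} : LTL AP → Set AP → Set (Set (FMark AP) × Set (LTL AP))
  | .tt, _ => {((∅ : Set (FMark AP)), (∅ : Set (LTL AP)))}
  | .ff, _ => ∅
  | .atom a, α => {p | p = ((∅ : Set (FMark AP)), (∅ : Set (LTL AP))) ∧ a ∈ α}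
  | .natom a, α => {p | p = ((∅ : Set (FMark AP)), (∅ : Set (LTL AP))) ∧ a ∉ α}
  | .and φ ψ, α => me (otimes (fmergeDelta φ α) (fmergeDelta ψ α))
  | .or φ ψ, α => me (fmergeDelta φ α ∪ fmergeDelta ψ α)
  | .next φ, _ => {((∅ : Set (FMark AP)), ({φ} : Set (LTL AP)))}
  | .untl φ ψ, α =>
      me (fmergeDelta ψ α) ∪
        otimes {(({FMark.base} : Set (FMark AP)), ({LTL.untl φ ψ} : Set (LTL AP)))}
          (me (fmergeDelta φ α))
  | .rels φ ψ, α =>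
      me (otimes (fmergeDelta φ α) (fmergeDelta ψ α)) ∪
        me (otimes {((∅ : Set (FMark AP)), ({LTL.rels φ ψ} : Set (LTL AP)))} (fmergeDelta ψ α))
  | .alw ψ, α =>
      me (otimes (∅ : Set (Set (FMark AP) × Set (LTL AP))) (fmergeDelta ψ α)) ∪
        me (otimes {((∅ : Set (FMark AP)), ({LTL.alw ψ} : Set (LTL AP)))} (fmergeDelta ψ α))
  | .ev ψ, α =>
      {(({FMark.base} : Set (FMark AP)), ({LTL.ev ψ} : Set (LTL AP)))} ∪
      {r | ∃ K, K ∈ ψ.dnfList ∧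
            (r ∈ me (deltaNL (fun χ => if _h : χ.size ≤ ψ.size then fmergeDelta χ α else ∅) K) ∨
             r ∈ otimes {((fMK ψ K : Set (FMark AP)), ({LTL.ev ψ} : Set (LTL AP)))}
                   (deltaL (fun χ => if _h : χ.size ≤ ψ.size then fmergeDelta χ α else ∅) K))}
termination_by φ _ => φ.size
decreasing_by
  all_goals simp [LTL.size] at *
  all_goals omega

/-- Acceptance marks of the F,G-merging translation: `f ψ` stands for the
mark `f_ψ`, `e ψ` for the escape mark `e_ψ` and `o ψ K` for `o^K_{Fψ}`. -/
inductive FGMark (AP : Type) : Type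
  | f (ψ : LTL AP) : FGMark AP
  | e (ψ : LTL AP) : FGMark AP
  | o (ψ : LTL AP) (K : Set (LTL AP)) : FGMark AP

/-- `M_K = {o^{K'}_{Fψ} | K' ∈ ψ̄, K' ≠ K}` for the F,G-merging translation. -/
def fgMK {AP : Type} (ψ : LTL AP) (K : Set (LTL AP)) : Set (FGMark AP) :=
  {m | ∃ K', K' ∈ ψ.dnfList ∧ K' ≠ K ∧ m = FGMark.o ψ K'}

/-- A formula whose topmost operator is `U` or `F`. -/
def IsUF {AP : Type} : LTL AP → Prop
  | .untl _ _ => True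
  | .ev _ => True
  | _ => False

/-- `Δ'_L`: looping transitions of `ψ'`, with `ψ'` removed from the
destination. -/
def dPrimeL {AP Mk : Type} (d : Set (Set Mk × Set (LTL AP))) (χ : LTL AP) :
    Set (Set Mk × Set (LTL AP)) :=
  {r | ∃ p ∈ d, χ ∈ p.2 ∧ r = (p.1, p.2 \ {χ})}

/-- `Δ'_NL`: non-looping transitions of `ψ'`, marked with the escape mark. -/
def dPrimeNL {AP : Type} (d : Set (Set (FGMark AP) × Set (LTL AP))) (χ : LTL AP) :
    Set (Set (FGMark AP) × Set (LTL AP)) :=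
  {r | ∃ p ∈ d, χ ∉ p.2 ∧ r = (({FGMark.e χ} : Set (FGMark AP)), p.2)}

/-- `Δ'(ψ', α)` used in the `G`-rule of the F,G-merging translation, where
`d = Δ(ψ', α)`. -/
def deltaPrime {AP : Type} (d : Set (Set (FGMark AP) × Set (LTL AP))) (χ : LTL AP) :
    Set (Set (FGMark AP) × Set (LTL AP)) :=
  {r | (IsUF χ ∧ r ∈ dPrimeL d χ ∪ dPrimeNL d χ) ∨
       (¬ IsUF χ ∧ ∃ p ∈ d, r = (p.1, p.2 \ {χ}))}

/-- The transition function of the F,G-merging translation. -/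
def fgDelta {AP : Type} : LTL AP → Set AP → Set (Set (FGMark AP) × Set (LTL AP))
  | .tt, _ => {((∅ : Set (FGMark AP)), (∅ : Set (LTL AP)))}
  | .ff, _ => ∅
  | .atom a, α => {p | p = ((∅ : Set (FGMark AP)), (∅ : Set (LTL AP))) ∧ a ∈ α}
  | .natom a, α => {p | p = ((∅ : Set (FGMark AP)), (∅ : Set (LTL AP))) ∧ a ∉ α}
  | .and φ ψ, α => me (otimes (fgDelta φ α) (fgDelta ψ α))
  | .or φ ψ, α => me (fgDelta φ α ∪ fgDelta ψ α)
  | .next φ, _ => {((∅ : Set (FGMark AP)), ({φ} : Set (LTL AP)))}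
  | .untl φ ψ, α =>
      me (fgDelta ψ α) ∪
        otimes {(({FGMark.f (LTL.untl φ ψ)} : Set (FGMark AP)), ({LTL.untl φ ψ} : Set (LTL AP)))}
          (me (fgDelta φ α))
  | .rels φ ψ, α =>
      me (otimes (fgDelta φ α) (fgDelta ψ α)) ∪
        me (otimes {((∅ : Set (FGMark AP)), ({LTL.rels φ ψ} : Set (LTL AP)))} (fgDelta ψ α))
  | .ev ψ, α =>
      {(({FGMark.f (LTL.ev ψ)} : Set (FGMark AP)), ({LTL.ev ψ} : Set (LTL AP)))} ∪
      {r | ∃ K, K ∈ ψ.dnfList ∧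
            (r ∈ me (deltaNL (fun χ => if _h : χ.size ≤ ψ.size then fgDelta χ α else ∅) K) ∨
             r ∈ otimes {((fgMK ψ K : Set (FGMark AP)), ({LTL.ev ψ} : Set (LTL AP)))}
                   (deltaL (fun χ => if _h : χ.size ≤ ψ.size then fgDelta χ α else ∅) K))}
  | .alw ψ, α =>
      {r | ((∀ χ ∈ ψ.conjuncts, χ.IsTemporal ∨ χ.IsState) ∧
              r ∈ otimes {((∅ : Set (FGMark AP)), ({LTL.alw ψ} : Set (LTL AP)))}
                    (setOtimes
                      (fun χ => deltaPrime (if _h : χ.size ≤ ψ.size then fgDelta χ α else ∅) χ)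
                      ψ.conjuncts)) ∨
           ((¬ ∀ χ ∈ ψ.conjuncts, χ.IsTemporal ∨ χ.IsState) ∧
              r ∈ me (otimes (∅ : Set (Set (FGMark AP) × Set (LTL AP))) (fgDelta ψ α)) ∪
                  me (otimes {((∅ : Set (FGMark AP)), ({LTL.alw ψ} : Set (LTL AP)))} (fgDelta ψ α)))}
termination_by φ _ => φ.size
decreasing_by
  all_goals simp [LTL.size] at *
  all_goals omega

/-- Big disjunction of a list of acceptance formulae. -/
def bigAndAcc {Mk : Type} (l : List (AccFormula Mk)) : AccFormula Mk :=
  l.foldr AccFormula.and AccFormula.tt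

def bigOrAcc {Mk : Type} (l : List (AccFormula Mk)) : AccFormula Mk :=
  l.foldr AccFormula.or AccFormula.ff

/-- The co-Büchi SLAA produced by the basic translation of `φ`. -/
def basicSLAA {AP : Type} (φ : LTL AP) : AltAutomaton (LTL AP) (Set AP) Unit where
  states := φ.subsSet
  alphabet := {α | α ⊆ φ.apSet}
  marks := {()}
  delta := {t | t.src ∈ φ.subsSet ∧ t.lab ⊆ φ.apSet ∧ (t.marks, t.dest) ∈ basicDelta t.src t.lab}
  init := φ
  acc := AccFormula.fin ()

/-- The acceptance formula of the F-merging translation: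
`Fin m ∧ ⋀_{Fψ} ⋁_{K ∈ ψ̄} Fin o^K_{Fψ}`. -/
def fmergeAcc {AP : Type} (φ : LTL AP) : AccFormula (FMark AP) :=
  AccFormula.and (AccFormula.fin FMark.base)
    (bigAndAcc ((φ.subs.filter LTL.isEv).map (fun χ =>
      match χ with
      | LTL.ev ψ => bigOrAcc (ψ.dnfList.map (fun K => AccFormula.fin (FMark.orange ψ K)))
      | _ => AccFormula.tt)))

/-- The Inf-less SLAA produced by the F-merging translation of `φ`. -/
def fmergeSLAA {AP : Type} (φ : LTL AP) : AltAutomaton (LTL AP) (Set AP) (FMark AP) where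
  states := φ.subsSet
  alphabet := {α | α ⊆ φ.apSet}
  marks := {FMark.base} ∪
    {m | ∃ ψ, LTL.ev ψ ∈ φ.subsSet ∧ ∃ K, K ∈ ψ.dnfList ∧ m = FMark.orange ψ K}
  delta := {t | t.src ∈ φ.subsSet ∧ t.lab ⊆ φ.apSet ∧ (t.marks, t.dest) ∈ fmergeDelta t.src t.lab}
  init := φ
  acc := fmergeAcc φ

/-- The acceptance formula of the F,G-merging translation:
`⋀_{ψ ∈ U_φ} (Fin f_ψ ∨ Inf e_ψ) ∧
 ⋀_{Fψ ∈ F_φ} ((Fin f_{Fψ} ∧ ⋁_{K ∈ ψ̄} Fin o^K_{Fψ}) ∨ Inf e_{Fψ})`. -/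
def fgAcc {AP : Type} (φ : LTL AP) : AccFormula (FGMark AP) :=
  AccFormula.and
    (bigAndAcc ((φ.subs.filter LTL.isU).map (fun ψ =>
      AccFormula.or (AccFormula.fin (FGMark.f ψ)) (AccFormula.inf (FGMark.e ψ)))))
    (bigAndAcc ((φ.subs.filter LTL.isEv).map (fun χ =>
      match χ with
      | LTL.ev ψ =>
          AccFormula.or
            (AccFormula.and (AccFormula.fin (FGMark.f (LTL.ev ψ)))
              (bigOrAcc (ψ.dnfList.map (fun K => AccFormula.fin (FGMark.o ψ K)))))
            (AccFormula.inf (FGMark.e (LTL.ev ψ)))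
      | _ => AccFormula.tt)))

/-- The set of acceptance marks of the F,G-merging translation. -/
def fgMarks {AP : Type} (φ : LTL AP) : Set (FGMark AP) :=
  {m | ∃ ψ₁ ψ₂, LTL.untl ψ₁ ψ₂ ∈ φ.subsSet ∧
        (m = FGMark.f (LTL.untl ψ₁ ψ₂) ∨ m = FGMark.e (LTL.untl ψ₁ ψ₂))} ∪
  {m | ∃ ψ, LTL.ev ψ ∈ φ.subsSet ∧
        (m = FGMark.f (LTL.ev ψ) ∨ m = FGMark.e (LTL.ev ψ) ∨
         ∃ K, K ∈ ψ.dnfList ∧ m = FGMark.o ψ K)}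

/-- The SLAA produced by the F,G-merging translation of `φ`. -/
def fgSLAA {AP : Type} (φ : LTL AP) : AltAutomaton (LTL AP) (Set AP) (FGMark AP) where
  states := φ.subsSet
  alphabet := {α | α ⊆ φ.apSet}
  marks := fgMarks φ
  delta := {t | t.src ∈ φ.subsSet ∧ t.lab ⊆ φ.apSet ∧ (t.marks, t.dest) ∈ fgDelta t.src t.lab}
  init := φ
  acc := fgAcc φ

/-- Big syntactic disjunction / conjunction of lists of LTL formulae. -/
def bigOrL {AP : Type} (l : List (LTL AP)) : LTL AP := l.foldr LTL.or LTL.ff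

def bigAndL {AP : Type} (l : List (LTL AP)) : LTL AP := l.foldr LTL.and LTL.tt

/-- `l` is a list enumerating exactly the elements of the set `S`. -/
def ListEnum {α : Type} (l : List α) (S : Set α) : Prop := ∀ x, x ∈ l ↔ x ∈ S

/-- `ψ` is a syntactic disjunction (resp. conjunction) of an enumeration of `G`. -/
def EnumOr {AP : Type} (G : Set (LTL AP)) (ψ : LTL AP) : Prop :=
  ∃ l, ListEnum l G ∧ ψ = bigOrL l

def EnumAnd {AP : Type} (G : Set (LTL AP)) (ψ : LTL AP) : Prop :=
  ∃ l, ListEnum l G ∧ ψ = bigAndL l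

/-- `ψ` is the formula `φ_α = ⋀_{a ∈ α} a ∧ ⋀_{a ∈ AP' ∖ α} ¬a`. -/
def LetterForm {AP : Type} (AP' α : Set AP) (ψ : LTL AP) : Prop :=
  EnumAnd ({χ | ∃ a ∈ α, χ = LTL.atom a} ∪ {χ | ∃ a ∈ AP' \ α, χ = LTL.natom a}) ψ

section SLAAtoLTL

variable {AP St Mk : Type}

/-- `χ` is the component formula `φ_α ∧ X φ(C ∖ {s})` of a looping transition `t`. -/
def CompLoop (AP' : Set AP) (F : St → LTL AP) (t : Trans St (Set AP) Mk)
    (χ : LTL AP) : Prop :=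
  ∃ ℓ ξ, LetterForm AP' t.lab ℓ ∧ EnumAnd (F '' (t.dest \ {t.src})) ξ ∧
    χ = LTL.and ℓ (LTL.next ξ)

/-- `χ` is the component formula `φ_α ∧ X φ(C)` of a non-looping transition `t`. -/
def CompNonLoop (AP' : Set AP) (F : St → LTL AP) (t : Trans St (Set AP) Mk)
    (χ : LTL AP) : Prop :=
  ∃ ℓ ξ, LetterForm AP' t.lab ℓ ∧ EnumAnd (F '' t.dest) ξ ∧
    χ = LTL.and ℓ (LTL.next ξ)

/-- Looping transitions of `A` from `s`. -/
def loopTrans {Λ' Mk' : Type} (A : AltAutomaton St Λ' Mk') (s : St) : Set (Trans St Λ' Mk') :=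
  {t | t ∈ A.delta ∧ t.src = s ∧ s ∈ t.dest}

/-- Non-looping transitions of `A` from `s`. -/
def nonloopTrans {Λ' Mk' : Type} (A : AltAutomaton St Λ' Mk') (s : St) : Set (Trans St Λ' Mk') :=
  {t | t ∈ A.delta ∧ t.src = s ∧ s ∉ t.dest}

/-- `ψ₁` is the formula
`(⋁_{loops} φ_α ∧ X φ(C∖{s})) U (⋁_{non-loops} φ_α ∧ X φ(C))`. -/
def Phi1Spec (AP' : Set AP) (A : AltAutomaton St (Set AP) Mk) (F : St → LTL AP)
    (s : St) (ψ₁ : LTL AP) : Prop :=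
  ∃ l₁ l₂ c₁ c₂, ListEnum l₁ (loopTrans A s) ∧ ListEnum l₂ (nonloopTrans A s) ∧
    List.Forall₂ (CompLoop AP' F) l₁ c₁ ∧ List.Forall₂ (CompNonLoop AP' F) l₂ c₂ ∧
    ψ₁ = LTL.untl (bigOrL c₁) (bigOrL c₂)

/-- `ψ₂` is the formula `G ⋁_{loops} φ_α ∧ X φ(C∖{s})`. -/
def Phi2Spec (AP' : Set AP) (A : AltAutomaton St (Set AP) Mk) (F : St → LTL AP)
    (s : St) (ψ₂ : LTL AP) : Prop :=
  ∃ l c, ListEnum l (loopTrans A s) ∧ List.Forall₂ (CompLoop AP' F) l c ∧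
    ψ₂ = LTL.alw (bigOrL c)

/-- `ξ` is the conjunct `GF ⋁_{loops marked by m} φ_α ∧ X φ(C∖{s})`. -/
def GFSpec (AP' : Set AP) (A : AltAutomaton St (Set AP) Mk) (F : St → LTL AP)
    (s : St) (m : Mk) (ξ : LTL AP) : Prop :=
  ∃ l c, ListEnum l {t | t ∈ loopTrans A s ∧ m ∈ t.marks} ∧
    List.Forall₂ (CompLoop AP' F) l c ∧ ξ = LTL.alw (LTL.ev (bigOrL c))

/-- `ξ` is the conjunct `FG ⋁_{loops not marked by m} φ_α ∧ X φ(C∖{s})`. -/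
def FGSpec (AP' : Set AP) (A : AltAutomaton St (Set AP) Mk) (F : St → LTL AP)
    (s : St) (m : Mk) (ξ : LTL AP) : Prop :=
  ∃ l c, ListEnum l {t | t ∈ loopTrans A s ∧ m ∉ t.marks} ∧
    List.Forall₂ (CompLoop AP' F) l c ∧ ξ = LTL.ev (LTL.alw (bigOrL c))

/-- `χ` is the disjunct of `φ₃(s)` corresponding to the minimal model `O`. -/
def ModelSpec (AP' : Set AP) (A : AltAutomaton St (Set AP) Mk) (F : St → LTL AP)
    (s : St) (O : Set (AccTerm Mk)) (χ : LTL AP) : Prop :=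
  ∃ linf lfin cinf cfin, ListEnum linf (infOf O) ∧ ListEnum lfin (finOf O) ∧
    List.Forall₂ (GFSpec AP' A F s) linf cinf ∧
    List.Forall₂ (FGSpec AP' A F s) lfin cfin ∧
    χ = LTL.and (bigAndL cinf) (bigAndL cfin)

/-- `ψ₃` is the disjunction over all minimal models of the acceptance formula. -/
def Phi3Spec (AP' : Set AP) (A : AltAutomaton St (Set AP) Mk) (F : St → LTL AP)
    (s : St) (ψ₃ : LTL AP) : Prop :=
  ∃ lm c, ListEnum lm A.acc.MinModels ∧
    List.Forall₂ (ModelSpec AP' A F s) lm c ∧ ψ₃ = bigOrL c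

/-- `F` is a result of the inductive SLAA-to-LTL translation: for every state
`s`, `F s = φ₁(s) ∨ (φ₂(s) ∧ φ₃(s))` as constructed from the transitions of
`A` and the minimal models of its acceptance formula. -/
def IsTranslation (AP' : Set AP) (A : AltAutomaton St (Set AP) Mk)
    (F : St → LTL AP) : Prop :=
  ∀ s ∈ A.states, ∃ ψ₁ ψ₂ ψ₃,
    Phi1Spec AP' A F s ψ₁ ∧ Phi2Spec AP' A F s ψ₂ ∧ Phi3Spec AP' A F s ψ₃ ∧
    F s = LTL.or ψ₁ (LTL.and ψ₂ ψ₃)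

end SLAAtoLTL

section Aux
variable {AP : Type}

lemma LTL.self_mem_subs (φ : LTL AP) : φ ∈ φ.subs := by
  cases φ <;> simp [LTL.subs]

lemma LTL.mem_subs_trans : ∀ (φ ψ χ : LTL AP), ψ ∈ φ.subs → χ ∈ ψ.subs → χ ∈ φ.subs := by
  intro φ
  induction φ with
  | tt => intro ψ χ h1 h2; simp [LTL.subs] at h1; subst h1; exact h2
  | ff => intro ψ χ h1 h2; simp [LTL.subs] at h1; subst h1; exact h2
  | atom a => intro ψ χ h1 h2; simp [LTL.subs] at h1; subst h1; exact h2
  | natom a => intro ψ χ h1 h2; simp [LTL.subs] at h1; subst h1; exact h2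
  | or φ₁ φ₂ ih1 ih2 =>
      intro ψ χ h1 h2; simp [LTL.subs] at h1 ⊢
      rcases h1 with h1 | h1 | h1
      · subst h1; simpa [LTL.subs] using h2
      · exact Or.inr (Or.inl (ih1 ψ χ h1 h2))
      · exact Or.inr (Or.inr (ih2 ψ χ h1 h2))
  | and φ₁ φ₂ ih1 ih2 =>
      intro ψ χ h1 h2; simp [LTL.subs] at h1 ⊢
      rcases h1 with h1 | h1 | h1
      · subst h1; simpa [LTL.subs] using h2
      · exact Or.inr (Or.inl (ih1 ψ χ h1 h2))
      · exact Or.inr (Or.inr (ih2 ψ χ h1 h2))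
  | next φ₁ ih =>
      intro ψ χ h1 h2; simp [LTL.subs] at h1 ⊢
      rcases h1 with h1 | h1
      · subst h1; simpa [LTL.subs] using h2
      · exact Or.inr (ih ψ χ h1 h2)
  | untl φ₁ φ₂ ih1 ih2 =>
      intro ψ χ h1 h2; simp [LTL.subs] at h1 ⊢
      rcases h1 with h1 | h1 | h1
      · subst h1; simpa [LTL.subs] using h2
      · exact Or.inr (Or.inl (ih1 ψ χ h1 h2))
      · exact Or.inr (Or.inr (ih2 ψ χ h1 h2))
  | rels φ₁ φ₂ ih1 ih2 =>
      intro ψ χ h1 h2; simp [LTL.subs] at h1 ⊢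
      rcases h1 with h1 | h1 | h1
      · subst h1; simpa [LTL.subs] using h2
      · exact Or.inr (Or.inl (ih1 ψ χ h1 h2))
      · exact Or.inr (Or.inr (ih2 ψ χ h1 h2))
  | ev φ₁ ih =>
      intro ψ χ h1 h2; simp [LTL.subs] at h1 ⊢
      rcases h1 with h1 | h1
      · subst h1; simpa [LTL.subs] using h2
      · exact Or.inr (ih ψ χ h1 h2)
  | alw φ₁ ih =>
      intro ψ χ h1 h2; simp [LTL.subs] at h1 ⊢
      rcases h1 with h1 | h1
      · subst h1; simpa [LTL.subs] using h2
      · exact Or.inr (ih ψ χ h1 h2)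

lemma LTL.size_le_of_mem_subs : ∀ (φ χ : LTL AP), χ ∈ φ.subs → χ.size ≤ φ.size := by
  intro φ
  induction φ with
  | tt => intro χ h; simp [LTL.subs] at h; subst h; simp
  | ff => intro χ h; simp [LTL.subs] at h; subst h; simp
  | atom a => intro χ h; simp [LTL.subs] at h; subst h; simp
  | natom a => intro χ h; simp [LTL.subs] at h; subst h; simp
  | or φ₁ φ₂ ih1 ih2 =>
      intro χ h; simp [LTL.subs] at h
      rcases h with h | h | h
      · subst h; simp
      · have := ih1 χ h; simp [LTL.size]; omega
      · have := ih2 χ h; simp [LTL.size]; omega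
  | and φ₁ φ₂ ih1 ih2 =>
      intro χ h; simp [LTL.subs] at h
      rcases h with h | h | h
      · subst h; simp
      · have := ih1 χ h; simp [LTL.size]; omega
      · have := ih2 χ h; simp [LTL.size]; omega
  | next φ₁ ih =>
      intro χ h; simp [LTL.subs] at h
      rcases h with h | h
      · subst h; simp
      · have := ih χ h; simp [LTL.size]; omega
  | untl φ₁ φ₂ ih1 ih2 =>
      intro χ h; simp [LTL.subs] at h
      rcases h with h | h | h
      · subst h; simp
      · have := ih1 χ h; simp [LTL.size]; omega
      · have := ih2 χ h; simp [LTL.size]; omega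
  | rels φ₁ φ₂ ih1 ih2 =>
      intro χ h; simp [LTL.subs] at h
      rcases h with h | h | h
      · subst h; simp
      · have := ih1 χ h; simp [LTL.size]; omega
      · have := ih2 χ h; simp [LTL.size]; omega
  | ev φ₁ ih =>
      intro χ h; simp [LTL.subs] at h
      rcases h with h | h
      · subst h; simp
      · have := ih χ h; simp [LTL.size]; omega
  | alw φ₁ ih =>
      intro χ h; simp [LTL.subs] at h
      rcases h with h | h
      · subst h; simp
      · have := ih χ h; simp [LTL.size]; omega

lemma LTL.subs_length (φ : LTL AP) : φ.subs.length = φ.size := by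
  induction φ <;> simp [LTL.subs, LTL.size, *]

lemma LTL.dnf_mem_subs :
    ∀ (ψ : LTL AP) (K : Set (LTL AP)) (χ : LTL AP),
      K ∈ ψ.dnfList → χ ∈ K → χ ∈ ψ.subs := by
  intro ψ
  induction ψ with
  | or φ₁ φ₂ ih1 ih2 =>
      intro K χ hK hχ
      simp only [LTL.dnfList, List.mem_append] at hK
      simp only [LTL.subs, List.mem_cons, List.mem_append]
      rcases hK with hK | hK
      · exact Or.inr (Or.inl (ih1 K χ hK hχ))
      · exact Or.inr (Or.inr (ih2 K χ hK hχ))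
  | and φ₁ φ₂ ih1 ih2 =>
      intro K χ hK hχ
      simp only [LTL.dnfList, List.mem_flatMap, List.mem_map] at hK
      obtain ⟨K₁, hK₁, K₂, hK₂, rfl⟩ := hK
      simp only [LTL.subs, List.mem_cons, List.mem_append]
      rcases hχ with hχ | hχ
      · exact Or.inr (Or.inl (ih1 K₁ χ hK₁ hχ))
      · exact Or.inr (Or.inr (ih2 K₂ χ hK₂ hχ))
  | tt => intro K χ hK hχ; simp [LTL.dnfList] at hK; subst hK
          simp at hχ; subst hχ; exact LTL.self_mem_subs _
  | ff => intro K χ hK hχ; simp [LTL.dnfList] at hK; subst hK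
          simp at hχ; subst hχ; exact LTL.self_mem_subs _
  | atom a => intro K χ hK hχ; simp [LTL.dnfList] at hK; subst hK
              simp at hχ; subst hχ; exact LTL.self_mem_subs _
  | natom a => intro K χ hK hχ; simp [LTL.dnfList] at hK; subst hK
               simp at hχ; subst hχ; exact LTL.self_mem_subs _
  | next φ₁ _ => intro K χ hK hχ; simp [LTL.dnfList] at hK; subst hK
                 simp at hχ; subst hχ; exact LTL.self_mem_subs _
  | untl φ₁ φ₂ _ _ => intro K χ hK hχ; simp [LTL.dnfList] at hK; subst hK
                      simp at hχ; subst hχ; exact LTL.self_mem_subs _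
  | rels φ₁ φ₂ _ _ => intro K χ hK hχ; simp [LTL.dnfList] at hK; subst hK
                      simp at hχ; subst hχ; exact LTL.self_mem_subs _
  | ev φ₁ _ => intro K χ hK hχ; simp [LTL.dnfList] at hK; subst hK
               simp at hχ; subst hχ; exact LTL.self_mem_subs _
  | alw φ₁ _ => intro K χ hK hχ; simp [LTL.dnfList] at hK; subst hK
                simp at hχ; subst hχ; exact LTL.self_mem_subs _

/-- `ev ψ` never belongs to a disjunct of the decomposition of `ψ`. -/
lemma LTL.ev_notMem_dnf {ψ : LTL AP} {K : Set (LTL AP)} (hK : K ∈ ψ.dnfList) :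
    LTL.ev ψ ∉ K := by
  intro h
  have h1 := LTL.size_le_of_mem_subs ψ (LTL.ev ψ) (LTL.dnf_mem_subs ψ K _ hK h)
  simp [LTL.size] at h1

/-- Extract the formula of a mark. -/
def FGMark.form : FGMark AP → LTL AP
  | .f ψ => ψ
  | .e ψ => ψ
  | .o ψ _ => ψ

/-- Encode an orange mark as a set of formulae. -/
def FGMark.code : FGMark AP → Set (LTL AP)
  | .o ψ K => insert (LTL.ev ψ) K
  | _ => ∅

end Aux

/-- The SLAA `A_φ` constructed by the F,G-merging translation
has at most `|φ|` states (its states are subformulae of `φ`); writing `n` for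
its number of states, it has at most `n` marks of the form `f_ψ`, at most `n`
marks of the form `e_ψ`, at most `2^n` marks of the form `o^K_{Fψ}`, and hence
at most `2n + 2^n` acceptance marks altogether. -/
theorem fgMerging_size {AP : Type} (φ : LTL AP) :
    (fgSLAA φ).states = φ.subsSet ∧
    (fgSLAA φ).states.ncard ≤ φ.size ∧
    {m | m ∈ (fgSLAA φ).marks ∧ ∃ ψ, m = FGMark.f ψ}.ncard ≤ (fgSLAA φ).states.ncard ∧
    {m | m ∈ (fgSLAA φ).marks ∧ ∃ ψ, m = FGMark.e ψ}.ncard ≤ (fgSLAA φ).states.ncard ∧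
    {m | m ∈ (fgSLAA φ).marks ∧ ∃ ψ K, m = FGMark.o ψ K}.ncard ≤
      2 ^ (fgSLAA φ).states.ncard ∧
    (fgSLAA φ).marks.ncard ≤
      2 * (fgSLAA φ).states.ncard + 2 ^ (fgSLAA φ).states.ncard := by
  classical
  have hstates : (fgSLAA φ).states = φ.subsSet := rfl
  have hfin : (φ.subsSet).Finite := by
    have : φ.subsSet = {x | x ∈ φ.subs} := rfl
    rw [this]; exact φ.subs.finite_toSet
  -- number of states
  have hsize : (fgSLAA φ).states.ncard ≤ φ.size := by
    have h1 : (fgSLAA φ).states = (↑φ.subs.toFinset : Set (LTL AP)) := by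
      ext x; simp [fgSLAA, LTL.subsSet]
    rw [h1, Set.ncard_coe_finset]
    calc φ.subs.toFinset.card ≤ φ.subs.length := φ.subs.toFinset_card_le
      _ = φ.size := φ.subs_length
  -- marks of the form f ψ
  have hFform : ∀ m ∈ (fgSLAA φ).marks, (∀ ψ K, m ≠ FGMark.o ψ K) →
      m.form ∈ φ.subsSet := by
    intro m hm hno
    rcases hm with ⟨ψ₁, ψ₂, hmem, hf | hf⟩ | ⟨ψ, hmem, hf | hf | ⟨K, hK, hf⟩⟩
    · subst hf; simpa [FGMark.form] using hmem
    · subst hf; simpa [FGMark.form] using hmem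
    · subst hf; simpa [FGMark.form] using hmem
    · subst hf; simpa [FGMark.form] using hmem
    · exact absurd hf (hno _ _)
  have hf_card : {m | m ∈ (fgSLAA φ).marks ∧ ∃ ψ, m = FGMark.f ψ}.ncard ≤
      (fgSLAA φ).states.ncard := by
    refine Set.ncard_le_ncard_of_injOn FGMark.form ?_ ?_ hfin
    · rintro m ⟨hm, ψ, rfl⟩
      exact hFform _ hm (by intro ψ' K' h; simp at h)
    · rintro m₁ ⟨_, ψ₁, rfl⟩ m₂ ⟨_, ψ₂, rfl⟩ h
      simp only [FGMark.form] at h; subst h; rfl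
  have he_card : {m | m ∈ (fgSLAA φ).marks ∧ ∃ ψ, m = FGMark.e ψ}.ncard ≤
      (fgSLAA φ).states.ncard := by
    refine Set.ncard_le_ncard_of_injOn FGMark.form ?_ ?_ hfin
    · rintro m ⟨hm, ψ, rfl⟩
      exact hFform _ hm (by intro ψ' K' h; simp at h)
    · rintro m₁ ⟨_, ψ₁, rfl⟩ m₂ ⟨_, ψ₂, rfl⟩ h
      simp only [FGMark.form] at h; subst h; rfl
  -- the set of subsets of the state set
  set P : Set (Set (LTL AP)) := {S | S ⊆ φ.subsSet} with hP
  have hPfin : P.Finite := hfin.finite_subsets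
  have hPcard : P.ncard = 2 ^ (fgSLAA φ).states.ncard := by
    have hFco : (↑hfin.toFinset : Set (LTL AP)) = φ.subsSet := hfin.coe_toFinset
    have himg : P = (fun G : Finset (LTL AP) => (↑G : Set (LTL AP))) ''
        (↑hfin.toFinset.powerset : Set (Finset (LTL AP))) := by
      ext S
      constructor
      · intro hS
        have hSfin : S.Finite := hfin.subset hS
        refine ⟨hSfin.toFinset, ?_, hSfin.coe_toFinset⟩
        simp only [Finset.mem_coe, Finset.mem_powerset]
        intro x hx
        rw [Set.Finite.mem_toFinset] at hx ⊢
        exact hS hx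
      · rintro ⟨G, hG, rfl⟩
        simp only [Finset.mem_coe, Finset.mem_powerset] at hG
        intro x hx
        have hxG : x ∈ hfin.toFinset := hG (Finset.mem_coe.mp hx)
        rwa [Set.Finite.mem_toFinset] at hxG
    rw [himg, Set.ncard_image_of_injective _ Finset.coe_injective,
      Set.ncard_coe_finset, Finset.card_powerset]
    congr 1
    rw [hstates, Set.ncard_eq_toFinset_card _ hfin]
  -- orange marks
  have hKdecode : ∀ m ∈ {m | m ∈ (fgSLAA φ).marks ∧ ∃ ψ K, m = FGMark.o ψ K},
      ∃ ψ K, m = FGMark.o ψ K ∧ LTL.ev ψ ∈ φ.subsSet ∧ K ∈ ψ.dnfList := by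
    rintro m ⟨hm, ψ, K, rfl⟩
    rcases hm with ⟨ψ₁, ψ₂, hmem, hf | hf⟩ | ⟨ψ', hmem, hf | hf | ⟨K', hK', hf⟩⟩
    · simp at hf
    · simp at hf
    · simp at hf
    · simp at hf
    · injection hf with h1 h2
      subst h1; subst h2
      exact ⟨ψ, K, rfl, hmem, hK'⟩
  have hmapP : ∀ m ∈ {m | m ∈ (fgSLAA φ).marks ∧ ∃ ψ K, m = FGMark.o ψ K},
      FGMark.code m ∈ P := by
    intro m hm
    obtain ⟨ψ, K, rfl, hev, hK⟩ := hKdecode m hm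
    intro x hx
    simp only [FGMark.code, Set.mem_insert_iff] at hx
    rcases hx with rfl | hx
    · exact hev
    · have hx1 : x ∈ ψ.subs := LTL.dnf_mem_subs ψ K x hK hx
      have hx2 : x ∈ (LTL.ev ψ).subs := by
        simp [LTL.subs]; exact Or.inr hx1
      exact LTL.mem_subs_trans φ (LTL.ev ψ) x hev hx2
  have hinj : Set.InjOn FGMark.code
      {m | m ∈ (fgSLAA φ).marks ∧ ∃ ψ K, m = FGMark.o ψ K} := by
    intro m₁ hm₁ m₂ hm₂ hcode
    obtain ⟨ψ₁, K₁, rfl, hev₁, hK₁⟩ := hKdecode m₁ hm₁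
    obtain ⟨ψ₂, K₂, rfl, hev₂, hK₂⟩ := hKdecode m₂ hm₂
    simp only [FGMark.code] at hcode
    have hne₁ : LTL.ev ψ₁ ∉ K₁ := LTL.ev_notMem_dnf hK₁
    have hne₂ : LTL.ev ψ₂ ∉ K₂ := LTL.ev_notMem_dnf hK₂
    have hψ : ψ₁ = ψ₂ := by
      by_contra hne
      have h12 : LTL.ev ψ₁ ∈ K₂ := by
        have : LTL.ev ψ₁ ∈ insert (LTL.ev ψ₂) K₂ := by
          rw [← hcode]; exact Set.mem_insert _ _
        rcases this with h | h
        · exact absurd (LTL.ev.inj h) hne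
        · exact h
      have h21 : LTL.ev ψ₂ ∈ K₁ := by
        have : LTL.ev ψ₂ ∈ insert (LTL.ev ψ₁) K₁ := by
          rw [hcode]; exact Set.mem_insert _ _
        rcases this with h | h
        · exact absurd ((LTL.ev.inj h).symm) hne
        · exact h
      have b1 : (LTL.ev ψ₁).size ≤ ψ₂.size :=
        LTL.size_le_of_mem_subs ψ₂ _ (LTL.dnf_mem_subs ψ₂ K₂ _ hK₂ h12)
      have b2 : (LTL.ev ψ₂).size ≤ ψ₁.size :=
        LTL.size_le_of_mem_subs ψ₁ _ (LTL.dnf_mem_subs ψ₁ K₁ _ hK₁ h21)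
      simp [LTL.size] at b1 b2
      omega
    subst hψ
    have hKeq : K₁ = K₂ := by
      ext x
      constructor
      · intro hx
        have : x ∈ insert (LTL.ev ψ₁) K₂ := by
          rw [← hcode]; exact Set.mem_insert_of_mem _ hx
        rcases this with h | h
        · subst h; exact absurd hx hne₁
        · exact h
      · intro hx
        have : x ∈ insert (LTL.ev ψ₁) K₁ := by
          rw [hcode]; exact Set.mem_insert_of_mem _ hx
        rcases this with h | h
        · subst h; exact absurd hx hne₂
        · exact h
    rw [hKeq]
  have ho_card : {m | m ∈ (fgSLAA φ).marks ∧ ∃ ψ K, m = FGMark.o ψ K}.ncard ≤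
      2 ^ (fgSLAA φ).states.ncard := by
    rw [← hPcard]
    exact Set.ncard_le_ncard_of_injOn FGMark.code hmapP hinj hPfin
  -- finiteness of the three pieces
  have hffin : {m | m ∈ (fgSLAA φ).marks ∧ ∃ ψ, m = FGMark.f ψ}.Finite := by
    apply (hfin.image FGMark.f).subset
    rintro m ⟨hm, ψ, rfl⟩
    exact ⟨ψ, hFform _ hm (by intro ψ' K' h; simp at h), rfl⟩
  have hefin : {m | m ∈ (fgSLAA φ).marks ∧ ∃ ψ, m = FGMark.e ψ}.Finite := by
    apply (hfin.image FGMark.e).subset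
    rintro m ⟨hm, ψ, rfl⟩
    exact ⟨ψ, hFform _ hm (by intro ψ' K' h; simp at h), rfl⟩
  have hofin : {m | m ∈ (fgSLAA φ).marks ∧ ∃ ψ K, m = FGMark.o ψ K}.Finite :=
    Set.Finite.of_finite_image (hPfin.subset (Set.image_subset_iff.mpr hmapP)) hinj
  -- total bound
  have htot : (fgSLAA φ).marks.ncard ≤
      2 * (fgSLAA φ).states.ncard + 2 ^ (fgSLAA φ).states.ncard := by
    have hsub : (fgSLAA φ).marks ⊆
        {m | m ∈ (fgSLAA φ).marks ∧ ∃ ψ, m = FGMark.f ψ} ∪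
        ({m | m ∈ (fgSLAA φ).marks ∧ ∃ ψ, m = FGMark.e ψ} ∪
         {m | m ∈ (fgSLAA φ).marks ∧ ∃ ψ K, m = FGMark.o ψ K}) := by
      intro m hm
      cases m with
      | f ψ => exact Or.inl ⟨hm, ψ, rfl⟩
      | e ψ => exact Or.inr (Or.inl ⟨hm, ψ, rfl⟩)
      | o ψ K => exact Or.inr (Or.inr ⟨hm, ψ, K, rfl⟩)
    calc (fgSLAA φ).marks.ncard
        ≤ ({m | m ∈ (fgSLAA φ).marks ∧ ∃ ψ, m = FGMark.f ψ} ∪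
            ({m | m ∈ (fgSLAA φ).marks ∧ ∃ ψ, m = FGMark.e ψ} ∪
             {m | m ∈ (fgSLAA φ).marks ∧ ∃ ψ K, m = FGMark.o ψ K})).ncard :=
          Set.ncard_le_ncard hsub ((hffin.union (hefin.union hofin)))
      _ ≤ {m | m ∈ (fgSLAA φ).marks ∧ ∃ ψ, m = FGMark.f ψ}.ncard +
            ({m | m ∈ (fgSLAA φ).marks ∧ ∃ ψ, m = FGMark.e ψ} ∪
             {m | m ∈ (fgSLAA φ).marks ∧ ∃ ψ K, m = FGMark.o ψ K}).ncard :=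
          Set.ncard_union_le _ _
      _ ≤ {m | m ∈ (fgSLAA φ).marks ∧ ∃ ψ, m = FGMark.f ψ}.ncard +
            ({m | m ∈ (fgSLAA φ).marks ∧ ∃ ψ, m = FGMark.e ψ}.ncard +
             {m | m ∈ (fgSLAA φ).marks ∧ ∃ ψ K, m = FGMark.o ψ K}.ncard) := by
          have := Set.ncard_union_le
            {m | m ∈ (fgSLAA φ).marks ∧ ∃ ψ, m = FGMark.e ψ}
            {m | m ∈ (fgSLAA φ).marks ∧ ∃ ψ K, m = FGMark.o ψ K}
          omega
      _ ≤ 2 * (fgSLAA φ).states.ncard + 2 ^ (fgSLAA φ).states.ncard := by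
          omega
  exact ⟨hstates, hsize, hf_card, he_card, ho_card, htot⟩

end SLAA
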